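/- Let μ, ν be probability measures on ℝ with finite first moment having the same mean, and let π ∈ Π(μ,ν). For u ∈ [0,1] set G(u) = ∫_ℝ y π_{F_μ^{-1}(u)}(dy), Δ₊(u) = ∫_0^u (F_μ^{-1} − G)⁺(v) dv and Δ₋(u) = ∫_0^u (F_μ^{-1} − G)⁻(v) dv. Then π satisfies the barycentre dispersion assumption if and only if Δ₊(u) ≥ Δ₋(u) for all u ∈ [0,1]. -/

import Mathlib

open MeasureTheory ProbabilityTheory Set Filter

noncomputable section

/-- Lebesgue measure restricted to `(0,1)`. -/
def lam01 : Measure ℝ := volume.restrict (Set.Ioo 0 1)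

/-- Cumulative distribution function `F_η(x) = η((-∞, x])`. -/
def Fcdf (η : Measure ℝ) (x : ℝ) : ℝ := (η (Set.Iic x)).toReal

/-- Left limit of the cumulative distribution function, `F_η(x-) = η((-∞, x))`. -/
def FcdfL (η : Measure ℝ) (x : ℝ) : ℝ := (η (Set.Iio x)).toReal

/-- Quantile function `F_η^{-1}(u) = inf {x : F_η(x) ≥ u}`. -/
def qf (η : Measure ℝ) (u : ℝ) : ℝ := sInf {x | u ≤ Fcdf η x}

/-- `π` is a coupling between `μ` and `ν`. -/
def IsCoupling (π : Measure (ℝ × ℝ)) (μ ν : Measure ℝ) : Prop :=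
  π.map Prod.fst = μ ∧ π.map Prod.snd = ν

/-- `W_ρ^ρ(η, η')`, the Wasserstein distance of order `ρ` raised to the power `ρ`. -/
def Wr (ρ : ℝ) (η η' : Measure ℝ) : ℝ :=
  sInf {c | ∃ π : Measure (ℝ × ℝ), IsCoupling π η η' ∧ c = ∫ p, |p.1 - p.2| ^ ρ ∂π}

/-- The Wasserstein distance of order `ρ`. -/
def W (ρ : ℝ) (η η' : Measure ℝ) : ℝ := Wr ρ η η' ^ (1 / ρ)

/-- The stochastic order `η ≤_st η'`: the quantile functions are ordered on `(0,1)`. -/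
def StochOrder (η η' : Measure ℝ) : Prop := ∀ u ∈ Set.Ioo (0 : ℝ) 1, qf η u ≤ qf η' u

/-- The convex order `μ ≤_cx ν`: `∫ f dμ ≤ ∫ f dν` for every (integrable) convex `f`. -/
def ConvexOrder (μ ν : Measure ℝ) : Prop :=
  ∀ f : ℝ → ℝ, ConvexOn ℝ Set.univ f → Integrable f μ → Integrable f ν →
    ∫ x, f x ∂μ ≤ ∫ x, f x ∂ν

/-- `AW_ρ^ρ(π, π')`, the adapted Wasserstein distance of order `ρ` raised to the power `ρ`:
the infimum over couplings `χ` between the first marginals of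
`∫ (|x-x'|^ρ + W_ρ^ρ(π_x, π'_{x'})) dχ`, where `κ, κ'` are disintegration kernels of `π, π'`. -/
def AWr (ρ : ℝ) (π π' : Measure (ℝ × ℝ)) : ℝ :=
  sInf {c | ∃ (χ : Measure (ℝ × ℝ)) (κ κ' : Kernel ℝ ℝ),
      IsCoupling χ (π.map Prod.fst) (π'.map Prod.fst) ∧
      π = (π.map Prod.fst).compProd κ ∧ π' = (π'.map Prod.fst).compProd κ' ∧
      c = ∫ q, (|q.1 - q.2| ^ ρ + Wr ρ (κ q.1) (κ' q.2)) ∂χ}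

/-- The adapted Wasserstein distance of order `ρ`. -/
def AW (ρ : ℝ) (π π' : Measure (ℝ × ℝ)) : ℝ := AWr ρ π π' ^ (1 / ρ)

/-- The lifted adapted Wasserstein distance of order `ρ`, raised to the power `ρ`, between the
lifted couplings with first marginals `μ, μ'` and kernels `p, p'`. -/
def lAWr (ρ : ℝ) (μ : Measure ℝ) (p : ℝ → Measure ℝ) (μ' : Measure ℝ)
    (p' : ℝ → Measure ℝ) : ℝ :=
  sInf {c | ∃ χ : Measure (ℝ × ℝ), IsCoupling χ lam01 lam01 ∧
      c = ∫ q, (|q.1 - q.2| ^ ρ + |qf μ q.1 - qf μ' q.2| ^ ρ + Wr ρ (p q.1) (p' q.2)) ∂χ}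

/-- The probability kernel `p` encodes a lifted coupling
`λ_{(0,1)}(du) δ_{F_μ^{-1}(u)}(dx) p_u(dy)` between `μ` and `ν`. -/
def IsLiftedCoupling (μ ν : Measure ℝ) (p : ℝ → Measure ℝ) : Prop :=
  Measurable p ∧ (∀ u, IsProbabilityMeasure (p u)) ∧ lam01.bind p = ν

/-- The probability kernel `m` encodes a lifted martingale coupling between `μ` and `ν`. -/
def IsLiftedMartingale (μ ν : Measure ℝ) (m : ℝ → Measure ℝ) : Prop :=
  IsLiftedCoupling μ ν m ∧ ∀ᵐ u ∂lam01, (∫ y, y ∂(m u)) = qf μ u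

end

/-!
Put `D(u) = ∫₀ᵘ (F_μ⁻¹ - G)`, so that `Δ₊ - Δ₋ = D` on `[0,1]` and `D(1) = 0` because the
means agree. Pushing Lebesgue measure on `(0,1)` forward by `F_μ⁻¹` gives
`∫_{[a,∞)} (x - ∫ y π_x(dy)) μ(dx) = ∫_{c(a)}^1 (F_μ⁻¹ - G) = -D(c(a))` with `c(a) = F_μ(a-)`,
so the barycentre dispersion assumption says exactly that `D ≥ 0` at all cut points `c(a)`.
Any other `u` lies in an interval on which `F_μ⁻¹` is constant and whose end points are cut
points or limits of them; on it `D` is affine, hence nonnegative as well.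
-/

open Topology

section CutPoint

variable {q : ℝ → ℝ} {a u : ℝ}

/-- For `q` monotone on `(0,1)`, `{u ∈ (0,1) | a ≤ q u}` is `(cutPoint q a, 1)` up to its left
end point; the `1` makes the infimum meaningful when that set is empty. -/
noncomputable def cutPoint (q : ℝ → ℝ) (a : ℝ) : ℝ := sInf (insert 1 {u ∈ Ioo 0 1 | a ≤ q u})

lemma bddBelow_insert_one_Ioo (q : ℝ → ℝ) (a : ℝ) :
    BddBelow (insert (1 : ℝ) {u ∈ Ioo 0 1 | a ≤ q u}) :=
  ⟨0, by rintro b (rfl | hb) <;> [norm_num; exact hb.1.1.le]⟩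

lemma cutPoint_mem_Icc (q : ℝ → ℝ) (a : ℝ) : cutPoint q a ∈ Icc 0 1 :=
  ⟨le_csInf (insert_nonempty _ _) (by rintro b (rfl | hb) <;> [norm_num; exact hb.1.1.le]),
    csInf_le (bddBelow_insert_one_Ioo q a) (mem_insert _ _)⟩

lemma cutPoint_le (hu : u ∈ Ioo 0 1) (ha : a ≤ q u) : cutPoint q a ≤ u :=
  csInf_le (bddBelow_insert_one_Ioo q a) (mem_insert_of_mem _ ⟨hu, ha⟩)

lemma monotone_cutPoint (q : ℝ → ℝ) : Monotone (cutPoint q) := fun _ _ hab =>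
  csInf_le_csInf (bddBelow_insert_one_Ioo q _) (insert_nonempty _ _)
    (insert_subset_insert fun _ hv => ⟨hv.1, hab.trans hv.2⟩)

lemma le_of_cutPoint_lt (hq : MonotoneOn q (Ioo 0 1)) (hu : u ∈ Ioo 0 1)
    (h : cutPoint q a < u) : a ≤ q u := by
  obtain ⟨v, hv, hvu⟩ := exists_lt_of_csInf_lt (insert_nonempty _ _) h
  rcases hv with rfl | hv
  · exact absurd hu.2 hvu.not_gt
  · exact hv.2.trans (hq hv.1 hu hvu.le)

lemma le_cutPoint_of_lt (hq : MonotoneOn q (Ioo 0 1)) (hu : u ∈ Ioo 0 1) (h : q u < a) :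
    u ≤ cutPoint q a :=
  not_lt.1 fun hlt => h.not_ge (le_of_cutPoint_lt hq hu hlt)

lemma ae_le_iff_cutPoint_lt (hq : MonotoneOn q (Ioo 0 1)) (a : ℝ) :
    ∀ᵐ u ∂volume, u ∈ Ioo 0 1 → (a ≤ q u ↔ cutPoint q a < u) := by
  filter_upwards [compl_mem_ae_iff.2 (measure_singleton (μ := volume) (cutPoint q a))]
    with u hne hu
  exact ⟨fun h => (cutPoint_le hu h).lt_of_ne (Ne.symm hne), le_of_cutPoint_lt hq hu⟩

lemma exists_tendsto_cutPoint_of_flat (hq : MonotoneOn q (Ioo 0 1)) (hu : u ∈ Ioo 0 1) :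
    ∃ r, u ≤ r ∧ r ≤ 1 ∧ Tendsto (cutPoint q) (𝓝[>] (q u)) (𝓝 r) ∧
      ∀ v ∈ Ioo (cutPoint q (q u)) r, q v = q u := by
  have hbdd := (monotone_cutPoint q).map_bddBelow (bddBelow_Ioi (a := q u))
  set r := sInf (cutPoint q '' Ioi (q u))
  have hr1 : r ≤ 1 :=
    csInf_le_of_le hbdd (mem_image_of_mem _ (lt_add_one (q u))) (cutPoint_mem_Icc q _).2
  refine ⟨r, ?_, hr1, (monotone_cutPoint q).tendsto_nhdsGT (q u), fun v hv => ?_⟩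
  · exact le_csInf (nonempty_Ioi.image _)
      (forall_mem_image.2 fun _ ha => le_cutPoint_of_lt hq hu ha)
  have hv01 : v ∈ Ioo 0 1 := ⟨(cutPoint_mem_Icc q _).1.trans_lt hv.1, hv.2.trans_le hr1⟩
  refine le_antisymm (not_lt.1 fun hlt => hv.2.not_ge ?_) (le_of_cutPoint_lt hq hv01 hv.1)
  exact csInf_le_of_le hbdd (mem_image_of_mem _ hlt) (cutPoint_le hv01 le_rfl)

lemma integral_eq_mul_of_eqOn_Ioo {f : ℝ → ℝ} {s t K : ℝ} (hst : s ≤ t)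
    (h : EqOn f (fun _ => K) (Ioo s t)) : ∫ v in s..t, f v = (t - s) * K := by
  simp [intervalIntegral.integral_congr_Ioo_of_le hst h]

/-- On the flat piece `(cutPoint q (q u), r)` around `u` the primitive is affine, so it is
nonnegative at `u` as soon as it is at both ends; `r` is a limit of cut points. -/
lemma integral_nonneg_of_nonneg_at_cutPoint {f : ℝ → ℝ} (hq : MonotoneOn q (Ioo 0 1))
    (hfq : ∀ v ∈ Ioo 0 1, ∀ w ∈ Ioo 0 1, q v = q w → f v = f w) (hf : IntegrableOn f (Icc 0 1))
    (hcut : ∀ a, 0 ≤ ∫ v in 0..cutPoint q a, f v) (hu : u ∈ Ioo 0 1) :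
    0 ≤ ∫ v in 0..u, f v := by
  obtain ⟨r, hur, hr1, hlim, hflat⟩ := exists_tendsto_cutPoint_of_flat hq hu
  set l := cutPoint q (q u)
  have hl := cutPoint_mem_Icc q (q u)
  have hlu : l ≤ u := cutPoint_le hu le_rfl
  have hr : r ∈ Icc 0 1 := ⟨hu.1.le.trans hur, hr1⟩
  have hu' : u ∈ Icc 0 1 := Ioo_subset_Icc_self hu
  set D := fun t => ∫ v in 0..t, f v
  have hDr : 0 ≤ D r := by
    have hD : ContinuousOn D (Icc 0 1) := by
      simpa using intervalIntegral.continuousOn_primitive_interval (a := 0) (b := 1) (by simpa)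
    have hlim' : Tendsto (cutPoint q) (𝓝[>] (q u)) (𝓝[Icc 0 1] r) :=
      tendsto_nhdsWithin_iff.2 ⟨hlim, Eventually.of_forall (cutPoint_mem_Icc q)⟩
    exact ge_of_tendsto ((hD r hr).tendsto.comp hlim') (Eventually.of_forall hcut)
  have hint : ∀ s ∈ Icc (0 : ℝ) 1, ∀ t ∈ Icc (0 : ℝ) 1, IntervalIntegrable f volume s t :=
    fun s hs t ht => (hf.mono_set (uIcc_subset_Icc hs ht)).intervalIntegrable
  have haffine : ∀ s t, l ≤ s → s ≤ t → t ≤ r → ∫ v in s..t, f v = (t - s) * f u :=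
    fun s t hs hst ht => integral_eq_mul_of_eqOn_Ioo hst fun v hv =>
      have hv' : v ∈ Ioo l r := ⟨hs.trans_lt hv.1, hv.2.trans_le ht⟩
      hfq v ⟨hl.1.trans_lt hv'.1, hv'.2.trans_le hr1⟩ u hu (hflat v hv')
  have hDu : D u = D l + (u - l) * f u := by
    rw [← haffine l u le_rfl hlu hur]
    exact (intervalIntegral.integral_add_adjacent_intervals
      (hint 0 (left_mem_Icc.2 zero_le_one) l hl) (hint l hl u hu')).symm
  have hDr' : D r = D u + (r - u) * f u := by
    rw [← haffine u r hlu hur le_rfl]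
    exact (intervalIntegral.integral_add_adjacent_intervals
      (hint 0 (left_mem_Icc.2 zero_le_one) u hu') (hint u hu' r hr)).symm
  rcases le_total 0 (f u) with hK | hK
  · nlinarith [hcut (q u)]
  · nlinarith

end CutPoint

section Quantile

variable {μ : Measure ℝ} [IsProbabilityMeasure μ] {u x : ℝ}

lemma Fcdf_eq_cdf (μ : Measure ℝ) [IsProbabilityMeasure μ] : Fcdf μ = cdf μ :=
  funext fun x => by rw [Fcdf, cdf_eq_real]; rfl

lemma bddBelow_le_Fcdf (hu : 0 < u) : BddBelow {x | u ≤ Fcdf μ x} := by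
  obtain ⟨x₀, hx₀⟩ := ((tendsto_cdf_atBot μ).eventually_lt_const hu).exists
  refine ⟨x₀, fun x hx => not_lt.1 fun hlt => ?_⟩
  rw [mem_ofPred_eq, Fcdf_eq_cdf] at hx
  exact (hx.trans ((cdf μ).mono hlt.le)).not_gt hx₀

/-- The infimum defining `qf μ u` is attained, by right continuity of the cdf. -/
lemma le_Fcdf_qf (hu : u ∈ Ioo 0 1) : u ≤ Fcdf μ (qf μ u) := by
  have hne : {x | u ≤ Fcdf μ x}.Nonempty := by
    obtain ⟨x, hx⟩ := ((tendsto_cdf_atTop μ).eventually_const_le hu.2).exists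
    exact ⟨x, by rwa [mem_ofPred_eq, Fcdf_eq_cdf]⟩
  rw [Fcdf_eq_cdf]
  refine ge_of_tendsto (((cdf μ).right_continuous _).mono Ioi_subset_Ici_self) ?_
  filter_upwards [self_mem_nhdsWithin] with x hx
  obtain ⟨y, hy, hyx⟩ := exists_lt_of_csInf_lt hne hx
  exact (Fcdf_eq_cdf μ ▸ hy).trans ((cdf μ).mono hyx.le)

lemma qf_le_iff (hu : u ∈ Ioo 0 1) : qf μ u ≤ x ↔ u ≤ Fcdf μ x :=
  ⟨fun h => (le_Fcdf_qf hu).trans (Fcdf_eq_cdf μ ▸ (cdf μ).mono h),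
    fun h => csInf_le (bddBelow_le_Fcdf hu.1) h⟩

lemma monotoneOn_qf : MonotoneOn (qf μ) (Ioo 0 1) := fun _ hu _ hv huv =>
  csInf_le_csInf (bddBelow_le_Fcdf hu.1) ⟨_, le_Fcdf_qf hv⟩ fun _ hx => huv.trans hx

instance : IsProbabilityMeasure lam01 :=
  ⟨by simp [lam01]⟩

lemma aemeasurable_qf : AEMeasurable (qf μ) lam01 :=
  aemeasurable_restrict_of_monotoneOn measurableSet_Ioo monotoneOn_qf

lemma map_qf : lam01.map (qf μ) = μ := by
  have := Measure.isProbabilityMeasure_map (aemeasurable_qf (μ := μ))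
  refine Measure.ext_of_Iic _ _ fun x => ?_
  rw [Measure.map_apply_of_aemeasurable aemeasurable_qf measurableSet_Iic, lam01,
    Measure.restrict_apply' measurableSet_Ioo]
  have hset : qf μ ⁻¹' Iic x ∩ Ioo 0 1 = Iic (Fcdf μ x) ∩ Ioo 0 1 := by
    ext u
    simp only [mem_inter_iff, mem_preimage, mem_Iic, and_congr_left_iff]
    exact qf_le_iff
  have hμx : μ (Iic x) = ENNReal.ofReal (Fcdf μ x) := by
    rw [Fcdf, ENNReal.ofReal_toReal (measure_ne_top μ _)]
  rw [hset, hμx]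
  have hF1 : Fcdf μ x ≤ 1 := Fcdf_eq_cdf μ ▸ cdf_le_one μ x
  apply le_antisymm
  · calc volume (Iic (Fcdf μ x) ∩ Ioo 0 1) ≤ volume (Ioc 0 (Fcdf μ x)) :=
          measure_mono fun v hv => ⟨hv.2.1, hv.1⟩
      _ = ENNReal.ofReal (Fcdf μ x) := by simp
  · calc ENNReal.ofReal (Fcdf μ x) = volume (Ioo 0 (Fcdf μ x)) := by simp
      _ ≤ volume (Iic (Fcdf μ x) ∩ Ioo 0 1) :=
          measure_mono fun v hv => ⟨hv.2.le, hv.1, hv.2.trans_le hF1⟩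

variable {E : Type*} [NormedAddCommGroup E] {g : ℝ → E}

lemma integral_comp_qf [NormedSpace ℝ E] (hg : AEStronglyMeasurable g μ) :
    ∫ u in Ioo 0 1, g (qf μ u) = ∫ x, g x ∂μ := by
  calc ∫ u in Ioo 0 1, g (qf μ u) = ∫ x, g x ∂(lam01.map (qf μ)) :=
        (integral_map aemeasurable_qf (by rwa [map_qf])).symm
    _ = ∫ x, g x ∂μ := by rw [map_qf]

lemma integrableOn_comp_qf (hg : Integrable g μ) :
    IntegrableOn (fun u => g (qf μ u)) (Icc 0 1) :=
  IntegrableOn.congr_set_ae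
    ((integrable_map_measure (by rw [map_qf]; exact hg.1) aemeasurable_qf).1 (by rwa [map_qf]))
    Ioo_ae_eq_Icc.symm

lemma intervalIntegral_comp_qf [NormedSpace ℝ E] (hg : AEStronglyMeasurable g μ) :
    ∫ u in 0..1, g (qf μ u) = ∫ x, g x ∂μ := by
  rw [intervalIntegral.integral_of_le zero_le_one, integral_Ioc_eq_integral_Ioo,
    integral_comp_qf hg]

lemma setIntegral_Ici_eq_integral_comp_qf [NormedSpace ℝ E] (hg : AEStronglyMeasurable g μ)
    (a : ℝ) : ∫ x in Ici a, g x ∂μ = ∫ u in cutPoint (qf μ) a..1, g (qf μ u) := by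
  have hc := cutPoint_mem_Icc (qf μ) a
  rw [← integral_indicator measurableSet_Ici,
    ← integral_comp_qf (μ := μ) (hg.indicator measurableSet_Ici),
    intervalIntegral.integral_of_le hc.2, integral_Ioc_eq_integral_Ioo,
    ← inter_eq_right.2 (Ioo_subset_Ioo_left hc.1), ← setIntegral_indicator measurableSet_Ioo]
  refine setIntegral_congr_ae measurableSet_Ioo ?_
  filter_upwards [ae_le_iff_cutPoint_lt (monotoneOn_qf (μ := μ)) a] with u hiff hu
  simp only [indicator, mem_Ici, mem_Ioo, hiff hu, hu.2, and_true]

lemma setIntegral_Ici_eq_neg_integral_comp_qf [NormedSpace ℝ E] (hg : Integrable g μ)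
    (hg0 : ∫ x, g x ∂μ = 0) (a : ℝ) :
    ∫ x in Ici a, g x ∂μ = -∫ u in 0..cutPoint (qf μ) a, g (qf μ u) := by
  have hint : ∀ t ∈ Icc (0 : ℝ) 1, IntervalIntegrable (fun u => g (qf μ u)) volume 0 t :=
    fun t ht => ((integrableOn_comp_qf hg).mono_set
      (uIcc_subset_Icc (left_mem_Icc.2 zero_le_one) ht)).intervalIntegrable
  rw [setIntegral_Ici_eq_integral_comp_qf hg.1, ← intervalIntegral.integral_interval_sub_left
    (hint 1 (right_mem_Icc.2 zero_le_one)) (hint _ (cutPoint_mem_Icc _ a)),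
    intervalIntegral_comp_qf hg.1, hg0, zero_sub]

end Quantile

lemma integral_posPart_sub_integral_negPart {f g : ℝ → ℝ} {a b : ℝ}
    (h : IntervalIntegrable (fun v => f v - g v) volume a b) :
    (∫ v in a..b, max (f v - g v) 0) - ∫ v in a..b, max (g v - f v) 0 =
      ∫ v in a..b, f v - g v := by
  have hpos : ∀ φ : ℝ → ℝ, IntervalIntegrable φ volume a b →
      IntervalIntegrable (fun v => max (φ v) 0) volume a b :=
    fun φ hφ => intervalIntegrable_iff.2 (intervalIntegrable_iff.1 hφ).pos_part
  have hneg : IntervalIntegrable (fun v => g v - f v) volume a b := by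
    simpa only [Pi.neg_def, neg_sub] using h.neg
  rw [← intervalIntegral.integral_sub (hpos _ h) (hpos _ hneg)]
  refine intervalIntegral.integral_congr fun v _ => ?_
  simpa [neg_sub] using max_zero_sub_max_neg_zero_eq_self (f v - g v)

section Barycentre

variable {α : Type*} [MeasurableSpace α] {μ : Measure α} [SFinite μ] {κ : Kernel α ℝ}
  [IsSFiniteKernel κ] {ν : Measure ℝ}

lemma integrable_integral_id_kernel (hν : (μ.compProd κ).map Prod.snd = ν)
    (hint : Integrable (fun y => y) ν) : Integrable (fun x => ∫ y, y ∂κ x) μ := by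
  rw [← hν, ← Measure.snd, Measure.snd_compProd] at hint
  exact (Measure.integrable_integral_norm_of_integrable_comp hint).mono'
    (StronglyMeasurable.integral_kernel_prod_right (f := fun _ y => y)
      measurable_snd.stronglyMeasurable).aestronglyMeasurable
    (Eventually.of_forall fun x => norm_integral_le_integral_norm _)

lemma integral_integral_id_kernel (hν : (μ.compProd κ).map Prod.snd = ν)
    (hint : Integrable (fun y => y) ν) : ∫ x, ∫ y, y ∂κ x ∂μ = ∫ y, y ∂ν := by
  rw [← hν] at hint ⊢
  rw [integral_map measurable_snd.aemeasurable measurable_id'.aestronglyMeasurable,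
    Measure.integral_compProd (f := fun p : α × ℝ => p.2)
      ((integrable_map_measure measurable_id'.aestronglyMeasurable
        measurable_snd.aemeasurable).1 hint)]

end Barycentre

theorem stmt5_general
    (μ ν : Measure ℝ) [IsProbabilityMeasure μ]
    (hμ1 : Integrable (fun x => |x|) μ) (hν1 : Integrable (fun x => |x|) ν)
    (hmean : (∫ x, x ∂μ) = ∫ y, y ∂ν)
    (κ : Kernel ℝ ℝ) [IsMarkovKernel κ]
    (π : Measure (ℝ × ℝ)) (hπd : π = μ.compProd κ) (hπ : IsCoupling π μ ν)
    (G Δp Δm : ℝ → ℝ)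
    (hG : ∀ u : ℝ, G u = ∫ y, y ∂(κ (qf μ u)))
    (hΔp : ∀ u : ℝ, Δp u = ∫ v in (0 : ℝ)..u, max (qf μ v - G v) 0)
    (hΔm : ∀ u : ℝ, Δm u = ∫ v in (0 : ℝ)..u, max (G v - qf μ v) 0) :
    (∀ a : ℝ, ∫ x in Set.Ici a, (x - ∫ y, y ∂(κ x)) ∂μ ≤ 0) ↔
      (∀ u ∈ Set.Icc (0 : ℝ) 1, Δm u ≤ Δp u) := by
  subst hπd
  obtain rfl : G = fun u => ∫ y, y ∂κ (qf μ u) := funext hG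
  have hid : ∀ η : Measure ℝ, Integrable (fun x => |x|) η → Integrable (fun x : ℝ => x) η :=
    fun η h => (integrable_norm_iff measurable_id'.aestronglyMeasurable).1 h
  have hbar := integrable_integral_id_kernel hπ.2 (hid ν hν1)
  set g : ℝ → ℝ := fun x => x - ∫ y, y ∂κ x
  have hg : Integrable g μ := (hid μ hμ1).sub hbar
  have hg0 : ∫ x, g x ∂μ = 0 := by
    rw [integral_sub (hid μ hμ1) hbar, integral_integral_id_kernel hπ.2 (hid ν hν1), hmean,
      sub_self]
  have hf : IntegrableOn (fun u => g (qf μ u)) (Icc 0 1) := integrableOn_comp_qf hg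
  have hΔ : ∀ u ∈ Icc (0 : ℝ) 1, Δp u - Δm u = ∫ v in 0..u, g (qf μ v) := fun u hu => by
    rw [hΔp, hΔm]
    exact integral_posPart_sub_integral_negPart (f := qf μ)
      (hf.mono_set (uIcc_subset_Icc (left_mem_Icc.2 zero_le_one) hu)).intervalIntegrable
  have hBDA := setIntegral_Ici_eq_neg_integral_comp_qf hg hg0
  constructor
  · intro h u hu
    rw [← sub_nonneg, hΔ u hu]
    rcases eq_endpoints_or_mem_Ioo_of_mem_Icc hu with rfl | rfl | hu
    · simp
    · rw [intervalIntegral_comp_qf hg.1, hg0]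
    · refine integral_nonneg_of_nonneg_at_cutPoint monotoneOn_qf
        (fun _ _ _ _ hvw => congrArg g hvw) hf (fun a => ?_) hu
      linarith [h a, hBDA a]
  · intro h a
    have hc := cutPoint_mem_Icc (qf μ) a
    rw [hBDA a, neg_nonpos, ← hΔ _ hc, sub_nonneg]
    exact h _ hc

/-- for `μ, ν` with the same mean and `π = μ ⊗ κ ∈ Π(μ,ν)`, the barycentre
dispersion assumption is equivalent to `Δ₊(u) ≥ Δ₋(u)` for all `u ∈ [0,1]`, where
`G(u) = ∫ y π_{F_μ^{-1}(u)}(dy)`, `Δ₊(u) = ∫_0^u (F_μ^{-1} - G)⁺` and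
`Δ₋(u) = ∫_0^u (F_μ^{-1} - G)⁻`. -/
theorem stmt5
    (μ ν : Measure ℝ) [IsProbabilityMeasure μ] [IsProbabilityMeasure ν]
    (hμ1 : Integrable (fun x => |x|) μ) (hν1 : Integrable (fun x => |x|) ν)
    (hmean : (∫ x, x ∂μ) = ∫ y, y ∂ν)
    (κ : Kernel ℝ ℝ) [IsMarkovKernel κ]
    (π : Measure (ℝ × ℝ)) (hπd : π = μ.compProd κ) (hπ : IsCoupling π μ ν)
    (G Δp Δm : ℝ → ℝ)
    (hG : ∀ u : ℝ, G u = ∫ y, y ∂(κ (qf μ u)))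
    (hΔp : ∀ u : ℝ, Δp u = ∫ v in (0 : ℝ)..u, max (qf μ v - G v) 0)
    (hΔm : ∀ u : ℝ, Δm u = ∫ v in (0 : ℝ)..u, max (G v - qf μ v) 0) :
    (∀ a : ℝ, ∫ x in Set.Ici a, (x - ∫ y, y ∂(κ x)) ∂μ ≤ 0) ↔
      (∀ u ∈ Set.Icc (0 : ℝ) 1, Δm u ≤ Δp u) :=
  stmt5_general μ ν hμ1 hν1 hmean κ π hπd hπ G Δp Δm hG hΔp hΔm
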